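/- arXiv:1510.06936 — 3 statements merged into one kernel-verified Lean document; each statement's English description precedes it below -/
import Mathlib

section
/- Let α0, α1, α2, β1, β2, β3 be real numbers with β2, β3 > 0, α0, α1, α2, β1 ≥ 0, satisfying α1·β1 − α0·β2 ≥ 0, α1² + α0·β2² ≥ α1·β1·β2, α0·β2 + β2·β1² ≥ α1·β1, and α1·β3 = α2·β2. Define k2 = √((α1·β1 − α0·β2)/β2), k1 = α1/β2 − k2, k3 = β1 − k2, b = β3, c = β2. Then b, c > 0, k1, k2, k3 ≥ 0, and moreover b·(k1 + k2) = α2, c·(k1 + k2) = α1, k1·k2 + k2·k3 + k1·k3 = α0, and k2 + k3 = β1. -/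
/-! The middle spring constant is `k₂ = √((α₁β₁ - α₀β₂)/β₂)`; the other two are then forced by
`k₁ + k₂ = α₁/β₂` and `k₂ + k₃ = β₁`, so the only content is `k₂ ≤ α₁/β₂` and `k₂ ≤ β₁`, which after
squaring are the two quadratic inequalities on the coefficients. The product identity follows from
`k₁k₂ + k₂k₃ + k₁k₃ = (k₁ + k₂)(k₂ + k₃) - k₂²`. -/

theorem sqrt_springArg_le_div {α0 α1 β1 β2 : ℝ} (hβ2 : 0 < β2) (hα1 : 0 ≤ α1)
    (h : α1 ^ 2 + α0 * β2 ^ 2 ≥ α1 * β1 * β2) :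
    √((α1 * β1 - α0 * β2) / β2) ≤ α1 / β2 := by
  refine Real.sqrt_le_iff.2 ⟨by positivity, ?_⟩
  rw [div_pow, div_le_div_iff₀ hβ2 (by positivity)]
  nlinarith

theorem sqrt_springArg_le {α0 α1 β1 β2 : ℝ} (hβ2 : 0 < β2) (hβ1 : 0 ≤ β1)
    (h : α0 * β2 + β2 * β1 ^ 2 ≥ α1 * β1) :
    √((α1 * β1 - α0 * β2) / β2) ≤ β1 := by
  refine Real.sqrt_le_iff.2 ⟨hβ1, ?_⟩
  rw [div_le_iff₀ hβ2]
  linarith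

theorem stmt_11_general (α0 α1 α2 β1 β2 β3 : ℝ)
    (hβ2 : 0 < β2) (hβ3 : 0 < β3)
    (hα1 : 0 ≤ α1) (hβ1 : 0 ≤ β1)
    (h1 : α1 * β1 - α0 * β2 ≥ 0)
    (h2 : α1 ^ 2 + α0 * β2 ^ 2 ≥ α1 * β1 * β2)
    (h3 : α0 * β2 + β2 * β1 ^ 2 ≥ α1 * β1)
    (h4 : α1 * β3 = α2 * β2)
    (k2 k1 k3 b c : ℝ)
    (hk2 : k2 = Real.sqrt ((α1 * β1 - α0 * β2) / β2))
    (hk1 : k1 = α1 / β2 - k2) (hk3 : k3 = β1 - k2)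
    (hb : b = β3) (hc : c = β2) :
    0 < b ∧ 0 < c ∧ 0 ≤ k1 ∧ 0 ≤ k2 ∧ 0 ≤ k3 ∧
    b * (k1 + k2) = α2 ∧ c * (k1 + k2) = α1 ∧
    k1 * k2 + k2 * k3 + k1 * k3 = α0 ∧ k2 + k3 = β1 := by
  subst b c
  have hk2_sq : k2 ^ 2 = (α1 * β1 - α0 * β2) / β2 := by
    rw [hk2, Real.sq_sqrt (div_nonneg h1 hβ2.le)]
  have hk12 : k1 + k2 = α1 / β2 := by rw [hk1]; ring
  have hk23 : k2 + k3 = β1 := by rw [hk3]; ring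
  refine ⟨hβ3, hβ2, ?_, hk2 ▸ Real.sqrt_nonneg _, ?_, ?_, ?_, ?_, hk23⟩
  · rw [hk1, hk2, sub_nonneg]; exact sqrt_springArg_le_div hβ2 hα1 h2
  · rw [hk3, hk2, sub_nonneg]; exact sqrt_springArg_le hβ2 hβ1 h3
  · rw [hk12]; field_simp; linarith
  · rw [hk12]; field_simp
  · calc k1 * k2 + k2 * k3 + k1 * k3 = (k1 + k2) * (k2 + k3) - k2 ^ 2 := by ring
      _ = α0 := by rw [hk12, hk23, hk2_sq]; field_simp; ring

theorem stmt_11 (α0 α1 α2 β1 β2 β3 : ℝ)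
    (hβ2 : 0 < β2) (hβ3 : 0 < β3)
    (hα0 : 0 ≤ α0) (hα1 : 0 ≤ α1) (hα2 : 0 ≤ α2) (hβ1 : 0 ≤ β1)
    (h1 : α1 * β1 - α0 * β2 ≥ 0)
    (h2 : α1 ^ 2 + α0 * β2 ^ 2 ≥ α1 * β1 * β2)
    (h3 : α0 * β2 + β2 * β1 ^ 2 ≥ α1 * β1)
    (h4 : α1 * β3 = α2 * β2)
    (k2 k1 k3 b c : ℝ)
    (hk2 : k2 = Real.sqrt ((α1 * β1 - α0 * β2) / β2))
    (hk1 : k1 = α1 / β2 - k2) (hk3 : k3 = β1 - k2)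
    (hb : b = β3) (hc : c = β2) :
    0 < b ∧ 0 < c ∧ 0 ≤ k1 ∧ 0 ≤ k2 ∧ 0 ≤ k3 ∧
    b * (k1 + k2) = α2 ∧ c * (k1 + k2) = α1 ∧
    k1 * k2 + k2 * k3 + k1 * k3 = α0 ∧ k2 + k3 = β1 :=
  stmt_11_general α0 α1 α2 β1 β2 β3 hβ2 hβ3 hα1 hβ1 h1 h2 h3 h4 k2 k1 k3 b c hk2 hk1 hk3 hb hc
end

section
/- Let α0, α1, α2, α3, β1, β2, β3 be real numbers with α3, β2, β3 > 0, α0, α1, α2, β1 ≥ 0, satisfying α1·β3 + α2·β2 ≥ α3·β1, α2·β2 + α3·β1 ≥ α1·β3, α1·β3 + α3·β1 ≥ α2·β2, α3 = β2·β3, and α1²·β3² + α2²·β2² + α3²·β1² + 4·α0·α3² = 2·(α1·β3·α2·β2 + α2·β2·α3·β1 + α3·β1·α1·β3). Define b = β3, c = β2, k1 = (α1·β3 + α2·β2 − α3·β1)/(2·α3), k2 = (α2·β2 − α1·β3 + α3·β1)/(2·α3), k3 = (α1·β3 − α2·β2 + α3·β1)/(2·α3). Then b, c > 0, k1, k2,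 k3 ≥ 0, b·c = α3, b·(k1 + k2) = α2, c·(k1 + k3) = α1, k2 + k3 = β1, and k1·k2 + k2·k3 + k1·k3 = α0. -/
/-! With `x = α1 β3`, `y = α2 β2`, `z = α3 β1`, the `kᵢ` are the half-differences of `x, y, z`
divided by `α3`. Their pairwise sums are therefore `x / α3`, `y / α3`, `z / α3`, and their second
elementary symmetric function is Heron's expression `(2(xy + yz + zx) - (x² + y² + z²)) / (4 α3²)`,
which the quadratic identity turns into `α0`. -/

section HalfDifferences

variable {K : Type*} [Field K] [CharZero K]

theorem div_two_mul_add_div_two_mul {u v : K} (w a : K) (h : u + v = 2 * w) :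
    u / (2 * a) + v / (2 * a) = w / a := by
  rw [← add_div, h, mul_div_mul_left _ _ two_ne_zero]

theorem half_differences_pairwise_mul_sum (x y z a : K) :
    (x + y - z) / (2 * a) * ((y - x + z) / (2 * a))
      + (y - x + z) / (2 * a) * ((x - y + z) / (2 * a))
      + (x + y - z) / (2 * a) * ((x - y + z) / (2 * a))
      = (2 * (x * y + y * z + z * x) - (x ^ 2 + y ^ 2 + z ^ 2)) / (4 * a ^ 2) := by
  ring

end HalfDifferences

theorem stmt_13_general (α0 α1 α2 α3 β1 β2 β3 : ℝ)
    (hα3 : 0 < α3) (hβ2 : 0 < β2) (hβ3 : 0 < β3)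
    (h1 : α1 * β3 + α2 * β2 ≥ α3 * β1)
    (h2 : α2 * β2 + α3 * β1 ≥ α1 * β3)
    (h3 : α1 * β3 + α3 * β1 ≥ α2 * β2)
    (h4 : α3 = β2 * β3)
    (h5 : α1 ^ 2 * β3 ^ 2 + α2 ^ 2 * β2 ^ 2 + α3 ^ 2 * β1 ^ 2 + 4 * α0 * α3 ^ 2
      = 2 * (α1 * β3 * (α2 * β2) + α2 * β2 * (α3 * β1) + α3 * β1 * (α1 * β3)))
    (b c k1 k2 k3 : ℝ)
    (hb : b = β3) (hc : c = β2)
    (hk1 : k1 = (α1 * β3 + α2 * β2 - α3 * β1) / (2 * α3))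
    (hk2 : k2 = (α2 * β2 - α1 * β3 + α3 * β1) / (2 * α3))
    (hk3 : k3 = (α1 * β3 - α2 * β2 + α3 * β1) / (2 * α3)) :
    0 < b ∧ 0 < c ∧ 0 ≤ k1 ∧ 0 ≤ k2 ∧ 0 ≤ k3 ∧
    b * c = α3 ∧ b * (k1 + k2) = α2 ∧ c * (k1 + k3) = α1 ∧
    k2 + k3 = β1 ∧ k1 * k2 + k2 * k3 + k1 * k3 = α0 := by
  subst b c k1 k2 k3
  have hα3₀ : α3 ≠ 0 := hα3.ne'
  have heron : 2 * (α1 * β3 * (α2 * β2) + α2 * β2 * (α3 * β1) + α3 * β1 * (α1 * β3))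
      - ((α1 * β3) ^ 2 + (α2 * β2) ^ 2 + (α3 * β1) ^ 2) = 4 * α0 * α3 ^ 2 := by
    linear_combination -h5
  have hden : 0 ≤ 2 * α3 := by positivity
  refine ⟨hβ3, hβ2, div_nonneg (by linarith) hden, div_nonneg (by linarith) hden,
    div_nonneg (by linarith) hden, by rw [h4, mul_comm], ?_, ?_, ?_, ?_⟩
  · rw [div_two_mul_add_div_two_mul (α2 * β2) _ (by ring), h4]
    field_simp
  · rw [div_two_mul_add_div_two_mul (α1 * β3) _ (by ring), h4]
    field_simp
  · rw [div_two_mul_add_div_two_mul (α3 * β1) _ (by ring), mul_div_cancel_left₀ _ hα3₀]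
  · rw [half_differences_pairwise_mul_sum, heron]
    field_simp

theorem stmt_13 (α0 α1 α2 α3 β1 β2 β3 : ℝ)
    (hα3 : 0 < α3) (hβ2 : 0 < β2) (hβ3 : 0 < β3)
    (hα0 : 0 ≤ α0) (hα1 : 0 ≤ α1) (hα2 : 0 ≤ α2) (hβ1 : 0 ≤ β1)
    (h1 : α1 * β3 + α2 * β2 ≥ α3 * β1)
    (h2 : α2 * β2 + α3 * β1 ≥ α1 * β3)
    (h3 : α1 * β3 + α3 * β1 ≥ α2 * β2)
    (h4 : α3 = β2 * β3)
    (h5 : α1 ^ 2 * β3 ^ 2 + α2 ^ 2 * β2 ^ 2 + α3 ^ 2 * β1 ^ 2 + 4 * α0 * α3 ^ 2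
      = 2 * (α1 * β3 * (α2 * β2) + α2 * β2 * (α3 * β1) + α3 * β1 * (α1 * β3)))
    (b c k1 k2 k3 : ℝ)
    (hb : b = β3) (hc : c = β2)
    (hk1 : k1 = (α1 * β3 + α2 * β2 - α3 * β1) / (2 * α3))
    (hk2 : k2 = (α2 * β2 - α1 * β3 + α3 * β1) / (2 * α3))
    (hk3 : k3 = (α1 * β3 - α2 * β2 + α3 * β1) / (2 * α3)) :
    0 < b ∧ 0 < c ∧ 0 ≤ k1 ∧ 0 ≤ k2 ∧ 0 ≤ k3 ∧
    b * c = α3 ∧ b * (k1 + k2) = α2 ∧ c * (k1 + k3) = α1 ∧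
    k2 + k3 = β1 ∧ k1 * k2 + k2 * k3 + k1 * k3 = α0 :=
  stmt_13_general α0 α1 α2 α3 β1 β2 β3 hα3 hβ2 hβ3 h1 h2 h3 h4 h5 b c k1 k2 k3 hb hc hk1 hk2 hk3
end

section
/- Let G be the real symmetric matrix [[G1, G4, G5], [G4, G2, G6], [G5, G6, G3]] with G4·G5·G6 > 0. If G1·G2·G3 + G4·G5·G6 − G1·G6² − G2·G5² = 0, then G3 < G5·G6/G4; if G1·G2·G3 + G4·G5·G6 − G1·G6² − G3·G4² = 0, then G2 < G4·G6/G5; if G1·G2·G3 + G4·G5·G6 − G3·G4² − G2·G5² = 0, then G1 < G4·G5/G6 — in each case under the additional assumption that G is positive semidefinite with all first-order and second-order minors nonzero. -/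
/-!
The determinant of `!![G1, G4, G5; G4, G2, G6; G5, G6, G3]` is
`G1 G2 G3 + 2 G4 G5 G6 - G1 G6² - G2 G5² - G3 G4²`, and it is nonnegative since the matrix is
positive semidefinite. Under the first vanishing condition it reduces to `G4 (G5 G6 - G3 G4)`,
which is therefore nonnegative, and in fact positive because `G4` and the minor `G3 G4 - G5 G6`
are nonzero; dividing by `G4²` gives `G3 < G5 G6 / G4`. The other two cases are the same with the
indices permuted.
-/

theorem Matrix.det_fin_three_symm {R : Type*} [CommRing R] (a b c d e f : R) :
    (!![a, d, e; d, b, f; e, f, c] : Matrix (Fin 3) (Fin 3) R).det =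
      a * b * c + 2 * d * e * f - a * f ^ 2 - b * e ^ 2 - c * d ^ 2 := by
  rw [Matrix.det_fin_three]
  simp only [Matrix.of_apply, Matrix.cons_val', Matrix.cons_val_zero, Matrix.cons_val_one,
    Matrix.cons_val, Matrix.cons_val_fin_one]
  ring

theorem lt_div_of_mul_sub_mul_nonneg {K : Type*} [Field K] [LinearOrder K] [IsStrictOrderedRing K]
    {x y z : K} (h : 0 ≤ x * (y - z * x)) (hx : x ≠ 0) (hne : z * x ≠ y) : z < y / x := by
  have hpos : 0 < x * (y - z * x) :=
    h.lt_of_ne (mul_ne_zero hx (sub_ne_zero.mpr hne.symm)).symm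
  rcases hx.lt_or_gt with hx_neg | hx_pos
  · rw [lt_div_iff_of_neg hx_neg]
    nlinarith
  · rw [lt_div_iff₀ hx_pos]
    nlinarith

theorem stmt_17_general (G1 G2 G3 G4 G5 G6 : ℝ)
    (hpsd : Matrix.PosSemidef (!![G1, G4, G5; G4, G2, G6; G5, G6, G3] : Matrix (Fin 3) (Fin 3) ℝ))
    (h4 : G4 ≠ 0) (h5 : G5 ≠ 0) (h6 : G6 ≠ 0)
    (m4 : G1 * G6 - G4 * G5 ≠ 0)
    (m5 : G4 * G6 - G2 * G5 ≠ 0) (m6 : G3 * G4 - G5 * G6 ≠ 0) :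
    (G1 * G2 * G3 + G4 * G5 * G6 - G1 * G6 ^ 2 - G2 * G5 ^ 2 = 0 → G3 < G5 * G6 / G4) ∧
    (G1 * G2 * G3 + G4 * G5 * G6 - G1 * G6 ^ 2 - G3 * G4 ^ 2 = 0 → G2 < G4 * G6 / G5) ∧
    (G1 * G2 * G3 + G4 * G5 * G6 - G3 * G4 ^ 2 - G2 * G5 ^ 2 = 0 → G1 < G4 * G5 / G6) := by
  have hdet := hpsd.det_nonneg
  rw [Matrix.det_fin_three_symm] at hdet
  refine ⟨fun h => ?_, fun h => ?_, fun h => ?_⟩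
  · exact lt_div_of_mul_sub_mul_nonneg (by linear_combination hdet + h) h4 (sub_ne_zero.mp m6)
  · exact lt_div_of_mul_sub_mul_nonneg (by linear_combination hdet + h) h5
      (sub_ne_zero.mp m5).symm
  · exact lt_div_of_mul_sub_mul_nonneg (by linear_combination hdet + h) h6 (sub_ne_zero.mp m4)

theorem stmt_17 (G1 G2 G3 G4 G5 G6 : ℝ)
    (hprod : G4 * G5 * G6 > 0)
    (hpsd : Matrix.PosSemidef (!![G1, G4, G5; G4, G2, G6; G5, G6, G3] : Matrix (Fin 3) (Fin 3) ℝ))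
    (h1 : G1 ≠ 0) (h2 : G2 ≠ 0) (h3 : G3 ≠ 0)
    (h4 : G4 ≠ 0) (h5 : G5 ≠ 0) (h6 : G6 ≠ 0)
    (m1 : G1 * G2 - G4 ^ 2 ≠ 0) (m2 : G1 * G3 - G5 ^ 2 ≠ 0)
    (m3 : G2 * G3 - G6 ^ 2 ≠ 0) (m4 : G1 * G6 - G4 * G5 ≠ 0)
    (m5 : G4 * G6 - G2 * G5 ≠ 0) (m6 : G3 * G4 - G5 * G6 ≠ 0) :
    (G1 * G2 * G3 + G4 * G5 * G6 - G1 * G6 ^ 2 - G2 * G5 ^ 2 = 0 → G3 < G5 * G6 / G4) ∧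
    (G1 * G2 * G3 + G4 * G5 * G6 - G1 * G6 ^ 2 - G3 * G4 ^ 2 = 0 → G2 < G4 * G6 / G5) ∧
    (G1 * G2 * G3 + G4 * G5 * G6 - G3 * G4 ^ 2 - G2 * G5 ^ 2 = 0 → G1 < G4 * G5 / G6) :=
  stmt_17_general G1 G2 G3 G4 G5 G6 hpsd h4 h5 h6 m4 m5 m6
end
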